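/- arXiv:2310.11946 — 4 statements merged into one kernel-verified Lean document; each statement's English description precedes it below -/
import Mathlib

section
/- Fix ε with 0 ≤ ε ≤ 1/2 and for θ ∈ ℝ set a(θ) = 2√(ε(1−ε))·cos 2θ + (1−2ε)·sin 2θ and b(θ) = (1−2ε)·cos 2θ + 2√(ε(1−ε))·sin 2θ. Then the supremum over θ ∈ ℝ of the largest eigenvalue of the Hermitian 4×4 matrix 2a(θ)·(X⊗X) + b(θ)·(Z⊗I + I⊗Z) + Z⊗Z equals 1 + 2√(1 + 4(1−2ε)√(ε(1−ε))), and it is attained at θ = π/8. -/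
open Matrix Complex Kronecker

noncomputable section

def PauliX : Matrix (Fin 2) (Fin 2) ℂ := !![0, 1; 1, 0]
def PauliY : Matrix (Fin 2) (Fin 2) ℂ := !![0, -Complex.I; Complex.I, 0]
def PauliZ : Matrix (Fin 2) (Fin 2) ℂ := !![1, 0; 0, -1]

/-- The 2×2 identity matrix. -/
def Id2 : Matrix (Fin 2) (Fin 2) ℂ := 1

/-- The largest eigenvalue of a (Hermitian) matrix, as the supremum of the
    Rayleigh quotient over unit vectors. -/
noncomputable def maxEig {m : Type*} [Fintype m] [DecidableEq m]
    (M : Matrix m m ℂ) : ℝ :=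
  ⨆ v : {v : m → ℂ // ∑ i, Complex.normSq (v i) = 1},
    (star v.1 ⬝ᵥ (M *ᵥ v.1)).re

/-- a(θ) = ⟨X̃₁⟩ = 2√(ε(1−ε))·cos 2θ + (1−2ε)·sin 2θ. -/
def aCoef (ε θ : ℝ) : ℝ :=
  2 * Real.sqrt (ε * (1 - ε)) * Real.cos (2 * θ) + (1 - 2 * ε) * Real.sin (2 * θ)

/-- b(θ) = ⟨Z̃₁⟩ = (1−2ε)·cos 2θ + 2√(ε(1−ε))·sin 2θ. -/
def bCoef (ε θ : ℝ) : ℝ :=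
  (1 - 2 * ε) * Real.cos (2 * θ) + 2 * Real.sqrt (ε * (1 - ε)) * Real.sin (2 * θ)

/-- The reduced three-qubit stabilizer witness operator
    2a(θ)·X⊗X + b(θ)·(Z⊗I + I⊗Z) + Z⊗Z. -/
def W3red (ε θ : ℝ) : Matrix (Fin 2 × Fin 2) (Fin 2 × Fin 2) ℂ :=
  ((2 * aCoef ε θ : ℝ) : ℂ) • (PauliX ⊗ₖ PauliX)
    + ((bCoef ε θ : ℝ) : ℂ) • (PauliZ ⊗ₖ Id2 + Id2 ⊗ₖ PauliZ)
    + PauliZ ⊗ₖ PauliZ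

/-!
For real `a, b` the operator `M(a, b) = 2a X⊗X + b (Z⊗I + I⊗Z) + Z⊗Z` splits into the blocks
`span{|00⟩, |11⟩}`, where it acts as `1 + 2 [[b, a], [a, -b]]`, and `span{|01⟩, |10⟩}`, where it
acts as `-1 + 2 [[0, a], [a, 0]]`. Hence its largest eigenvalue is `1 + 2 √(a² + b²)`. The
imprecise coefficients satisfy `a(θ)² + b(θ)² = 1 + 4(1 - 2ε)√(ε(1 - ε)) sin 4θ`, which is
maximal at `θ = π/8`.
-/

theorem ciSup_eq_of_forall_le_of_eq {ι α : Type*} [ConditionallyCompleteLattice α]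
    {f : ι → α} {c : α} (hle : ∀ i, f i ≤ c) (i₀ : ι) (h : f i₀ = c) : ⨆ i, f i = c :=
  IsGreatest.csSup_eq ⟨⟨i₀, h⟩, Set.forall_mem_range.2 hle⟩

theorem mul_add_mul_le_of_sq_le {a b r D E S : ℝ} (hr : 0 ≤ r) (habr : a ^ 2 + b ^ 2 ≤ r ^ 2)
    (hS : 0 ≤ S) (hDES : D ^ 2 + E ^ 2 ≤ S ^ 2) : b * D + a * E ≤ r * S := by
  have hsq : (b * D + a * E) ^ 2 ≤ (r * S) ^ 2 := by
    nlinarith [sq_nonneg (b * E - a * D), mul_le_mul habr hDES (by positivity) (sq_nonneg r)]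
  exact le_of_abs_le (abs_le_of_sq_le_sq hsq (mul_nonneg hr hS))

/-- The quadratic form of `[[b, a], [a, -b]]`, whose eigenvalues are `±√(a² + b²)`. -/
theorem symm_quadForm_le {a b r : ℝ} (hr : 0 ≤ r) (habr : a ^ 2 + b ^ 2 ≤ r ^ 2) (u w : ℂ) :
    b * (normSq u - normSq w) + a * (2 * (starRingEnd ℂ u * w).re)
      ≤ r * (normSq u + normSq w) := by
  refine mul_add_mul_le_of_sq_le hr habr (add_nonneg (normSq_nonneg u) (normSq_nonneg w)) ?_
  have hre := re_sq_le_normSq (starRingEnd ℂ u * w)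
  rw [normSq_mul, normSq_conj] at hre
  nlinarith

def witnessMatrix (a b : ℝ) : Matrix (Fin 2 × Fin 2) (Fin 2 × Fin 2) ℂ :=
  ((2 * a : ℝ) : ℂ) • (PauliX ⊗ₖ PauliX)
    + ((b : ℝ) : ℂ) • (PauliZ ⊗ₖ Id2 + Id2 ⊗ₖ PauliZ)
    + PauliZ ⊗ₖ PauliZ

theorem W3red_eq_witnessMatrix (ε θ : ℝ) :
    W3red ε θ = witnessMatrix (aCoef ε θ) (bCoef ε θ) :=
  rfl

theorem re_star_dotProduct_witnessMatrix_mulVec (a b : ℝ) (v : Fin 2 × Fin 2 → ℂ) :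
    (star v ⬝ᵥ (witnessMatrix a b *ᵥ v)).re =
      (normSq (v (0, 0)) + normSq (v (1, 1)))
        + 2 * (b * (normSq (v (0, 0)) - normSq (v (1, 1)))
          + a * (2 * (starRingEnd ℂ (v (0, 0)) * v (1, 1)).re))
        - (normSq (v (0, 1)) + normSq (v (1, 0)))
        + 2 * (a * (2 * (starRingEnd ℂ (v (0, 1)) * v (1, 0)).re)) := by
  simp [witnessMatrix, PauliX, PauliZ, Id2, dotProduct, mulVec, Fintype.sum_prod_type,
    Fin.sum_univ_two, normSq_apply]
  ring

theorem re_star_dotProduct_witnessMatrix_mulVec_le (a b : ℝ) (v : Fin 2 × Fin 2 → ℂ)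
    (hv : ∑ i, normSq (v i) = 1) :
    (star v ⬝ᵥ (witnessMatrix a b *ᵥ v)).re ≤ 1 + 2 * √(a ^ 2 + b ^ 2) := by
  set r := √(a ^ 2 + b ^ 2)
  have hr : 0 ≤ r := Real.sqrt_nonneg _
  have habr : a ^ 2 + b ^ 2 ≤ r ^ 2 := (Real.sq_sqrt (by positivity)).ge
  have hdiag := symm_quadForm_le hr habr (v (0, 0)) (v (1, 1))
  have hoff := symm_quadForm_le (a := a) (b := 0) hr (by nlinarith) (v (0, 1)) (v (1, 0))
  simp only [Fintype.sum_prod_type, Fin.sum_univ_two] at hv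
  rw [re_star_dotProduct_witnessMatrix_mulVec]
  linarith [congrArg (r * ·) hv, normSq_nonneg (v (0, 1)), normSq_nonneg (v (1, 0))]

/-- The eigenvector `cos ψ |00⟩ + sin ψ |11⟩`, where `b + a i = r e^{2iψ}`. -/
theorem exists_re_star_dotProduct_witnessMatrix_mulVec_eq (a b : ℝ) :
    ∃ v : Fin 2 × Fin 2 → ℂ, ∑ i, normSq (v i) = 1 ∧
      (star v ⬝ᵥ (witnessMatrix a b *ᵥ v)).re = 1 + 2 * √(a ^ 2 + b ^ 2) := by
  set r := √(a ^ 2 + b ^ 2)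
  obtain ⟨ψ, hψ⟩ : ∃ ψ, 2 * ψ = arg (b + a * I) := ⟨_, mul_div_cancel₀ _ two_ne_zero⟩
  have hnorm : ‖(b + a * I : ℂ)‖ = r := by rw [norm_add_mul_I, add_comm]
  have hcos : r * Real.cos (2 * ψ) = b := by
    simpa [hψ, hnorm] using norm_mul_cos_arg (b + a * I)
  have hsin : r * Real.sin (2 * ψ) = a := by
    simpa [hψ, hnorm] using norm_mul_sin_arg (b + a * I)
  rw [Real.cos_two_mul'] at hcos
  rw [Real.sin_two_mul] at hsin
  set c := Real.cos ψ
  set s := Real.sin ψ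
  have hpyth : c ^ 2 + s ^ 2 = 1 := Real.cos_sq_add_sin_sq ψ
  refine ⟨fun p => ![![(c : ℂ), 0], ![0, (s : ℂ)]] p.1 p.2, ?_, ?_⟩
  · simpa [Fintype.sum_prod_type, Fin.sum_univ_two, ← sq] using hpyth
  · rw [re_star_dotProduct_witnessMatrix_mulVec, ← hcos, ← hsin]
    simp only [cons_val', cons_val_zero, cons_val_one, cons_val_fin_one, normSq_ofReal, ← sq,
      conj_ofReal, mul_re, ofReal_re, ofReal_im, map_zero, ne_eq, OfNat.ofNat_ne_zero,
      not_false_eq_true, zero_pow, zero_re, mul_zero, sub_zero, add_zero]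
    linear_combination (1 + 2 * r * (c ^ 2 + s ^ 2 + 1)) * hpyth

theorem maxEig_witnessMatrix (a b : ℝ) :
    maxEig (witnessMatrix a b) = 1 + 2 * √(a ^ 2 + b ^ 2) :=
  let ⟨v, hv, hv_eq⟩ := exists_re_star_dotProduct_witnessMatrix_mulVec_eq a b
  ciSup_eq_of_forall_le_of_eq (fun v => re_star_dotProduct_witnessMatrix_mulVec_le a b v.1 v.2)
    ⟨v, hv⟩ hv_eq

theorem aCoef_sq_add_bCoef_sq {ε : ℝ} (hε0 : 0 ≤ ε) (hε1 : ε ≤ 1) (θ : ℝ) :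
    aCoef ε θ ^ 2 + bCoef ε θ ^ 2
      = 1 + 4 * (1 - 2 * ε) * √(ε * (1 - ε)) * Real.sin (4 * θ) := by
  have hsqrt : √(ε * (1 - ε)) ^ 2 = ε * (1 - ε) := Real.sq_sqrt (by nlinarith)
  have hsin : Real.sin (4 * θ) = 2 * Real.sin (2 * θ) * Real.cos (2 * θ) := by
    rw [← Real.sin_two_mul, ← mul_assoc]; norm_num
  rw [aCoef, bCoef, hsin]
  linear_combination (4 * √(ε * (1 - ε)) ^ 2 + (1 - 2 * ε) ^ 2) * Real.sin_sq_add_cos_sq (2 * θ)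
    + 4 * hsqrt

/-- the biseparable bound of the three-qubit stabilizer witness
    with imprecision only in one party. -/
theorem stab3_one_party_bound (ε : ℝ) (hε0 : 0 ≤ ε) (hε1 : ε ≤ 1 / 2) :
    (⨆ θ : ℝ, maxEig (W3red ε θ))
        = 1 + 2 * Real.sqrt (1 + 4 * (1 - 2 * ε) * Real.sqrt (ε * (1 - ε)))
      ∧ maxEig (W3red ε (Real.pi / 8))
        = 1 + 2 * Real.sqrt (1 + 4 * (1 - 2 * ε) * Real.sqrt (ε * (1 - ε))) := by
  set c := 4 * (1 - 2 * ε) * √(ε * (1 - ε))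
  have hc : 0 ≤ c := mul_nonneg (by linarith) (Real.sqrt_nonneg _)
  have hmaxEig (θ : ℝ) : maxEig (W3red ε θ) = 1 + 2 * √(1 + c * Real.sin (4 * θ)) := by
    rw [W3red_eq_witnessMatrix, maxEig_witnessMatrix,
      aCoef_sq_add_bCoef_sq hε0 (by linarith)]
  have hpi8 : maxEig (W3red ε (Real.pi / 8)) = 1 + 2 * √(1 + c) := by
    rw [hmaxEig, show 4 * (Real.pi / 8) = Real.pi / 2 by ring, Real.sin_pi_div_two, mul_one]
  refine ⟨ciSup_eq_of_forall_le_of_eq (fun θ => ?_) _ hpi8, hpi8⟩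
  rw [hmaxEig]
  gcongr
  exact mul_le_of_le_one_right hc (Real.sin_le_one _)
end
end

section
/- Fix ε with 0 ≤ ε ≤ 1/2 and for θ ∈ ℝ set a(θ) = 2√(ε(1−ε))·cos 2θ + (1−2ε)·sin 2θ and b(θ) = (1−2ε)·cos 2θ + 2√(ε(1−ε))·sin 2θ. Then the supremum over θ ∈ ℝ of the largest eigenvalue of the Hermitian 8×8 matrix 4a(θ)·(X⊗X⊗X) + (I⊗Z⊗Z + Z⊗I⊗Z + Z⊗Z⊗I) + b(θ)·(I⊗I⊗Z + I⊗Z⊗I + Z⊗I⊗I + Z⊗Z⊗Z) equals 3 + 4√(1 + 4(1−2ε)√(ε(1−ε))), and it is attained at θ = π/8. -/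
open Matrix Complex Kronecker

noncomputable section

/-- The reduced four-qubit stabilizer witness operator
    4a(θ)·X⊗X⊗X + (I⊗Z⊗Z + Z⊗I⊗Z + Z⊗Z⊗I)
      + b(θ)·(I⊗I⊗Z + I⊗Z⊗I + Z⊗I⊗I + Z⊗Z⊗Z). -/
def W4red (ε θ : ℝ) : Matrix ((Fin 2 × Fin 2) × Fin 2) ((Fin 2 × Fin 2) × Fin 2) ℂ :=
  ((4 * aCoef ε θ : ℝ) : ℂ) • (PauliX ⊗ₖ PauliX ⊗ₖ PauliX)
    + (Id2 ⊗ₖ PauliZ ⊗ₖ PauliZ + PauliZ ⊗ₖ Id2 ⊗ₖ PauliZ + PauliZ ⊗ₖ PauliZ ⊗ₖ Id2)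
    + ((bCoef ε θ : ℝ) : ℂ) •
        (Id2 ⊗ₖ Id2 ⊗ₖ PauliZ + Id2 ⊗ₖ PauliZ ⊗ₖ Id2 + PauliZ ⊗ₖ Id2 ⊗ₖ Id2
          + PauliZ ⊗ₖ PauliZ ⊗ₖ PauliZ)

section Aux

lemma pairM_le (A r : ℝ) (hr : 0 ≤ r) (ha : A^2 ≤ r^2) (x y : ℂ) :
    -(normSq x + normSq y) + 8*A*(x.re*y.re + x.im*y.im)
      ≤ (3+4*r) * (normSq x + normSq y) := by
  have hA1 : A ≤ 1 + r := by nlinarith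
  have hA2 : -(1+r) ≤ A := by nlinarith
  simp only [Complex.normSq_apply]
  nlinarith [mul_nonneg (by linarith : (0:ℝ) ≤ 2*(1+r)+2*A) (sq_nonneg (x.re - y.re)),
    mul_nonneg (by linarith : (0:ℝ) ≤ 2*(1+r)-2*A) (sq_nonneg (x.re + y.re)),
    mul_nonneg (by linarith : (0:ℝ) ≤ 2*(1+r)+2*A) (sq_nonneg (x.im - y.im)),
    mul_nonneg (by linarith : (0:ℝ) ≤ 2*(1+r)-2*A) (sq_nonneg (x.im + y.im))]

lemma pair0_le (A B r : ℝ) (hr : 0 ≤ r) (hab : A^2 + B^2 ≤ r^2) (x y : ℂ) :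
    (3+4*B) * normSq x + (3-4*B) * normSq y + 8*A*(x.re*y.re + x.im*y.im)
      ≤ (3+4*r) * (normSq x + normSq y) := by
  have hB1 : B ≤ r := by nlinarith
  have hB2 : -r ≤ B := by nlinarith
  have h1 : 0 ≤ (r - B)*(r + B) - A^2 := by nlinarith
  simp only [Complex.normSq_apply]
  rcases eq_or_lt_of_le hB1 with hEq | hlt
  · have hA0 : A = 0 := by nlinarith [sq_nonneg A]
    subst hA0
    subst hEq
    nlinarith [mul_nonneg hr (sq_nonneg y.re), mul_nonneg hr (sq_nonneg y.im)]
  · nlinarith [sq_nonneg (2*(r-B)*x.re - 2*A*y.re), sq_nonneg (2*(r-B)*x.im - 2*A*y.im),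
      mul_nonneg h1 (sq_nonneg y.re), mul_nonneg h1 (sq_nonneg y.im), hlt,
      mul_pos (sub_pos.2 hlt) (sub_pos.2 hlt)]

lemma W4red_form (ε θ : ℝ) (v : ((Fin 2 × Fin 2) × Fin 2) → ℂ) :
    (star v ⬝ᵥ (W4red ε θ *ᵥ v)).re =
      ((3+4*bCoef ε θ) * normSq (v ((0,0),0)) + (3-4*bCoef ε θ) * normSq (v ((1,1),1))
        + 8*aCoef ε θ*((v ((0,0),0)).re*(v ((1,1),1)).re + (v ((0,0),0)).im*(v ((1,1),1)).im))
      + (-(normSq (v ((0,0),1)) + normSq (v ((1,1),0)))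
        + 8*aCoef ε θ*((v ((0,0),1)).re*(v ((1,1),0)).re + (v ((0,0),1)).im*(v ((1,1),0)).im))
      + (-(normSq (v ((0,1),0)) + normSq (v ((1,0),1)))
        + 8*aCoef ε θ*((v ((0,1),0)).re*(v ((1,0),1)).re + (v ((0,1),0)).im*(v ((1,0),1)).im))
      + (-(normSq (v ((0,1),1)) + normSq (v ((1,0),0)))
        + 8*aCoef ε θ*((v ((0,1),1)).re*(v ((1,0),0)).re + (v ((0,1),1)).im*(v ((1,0),0)).im)) := by
  simp only [W4red, dotProduct, mulVec, Fintype.sum_prod_type, Fin.sum_univ_two,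
    Matrix.add_apply, Matrix.smul_apply, Matrix.kroneckerMap_apply, PauliX, PauliZ, Id2,
    Matrix.one_apply, Matrix.cons_val', Matrix.cons_val_zero, Matrix.cons_val_one,
    Matrix.head_cons, Matrix.head_fin_const, Matrix.empty_val', Matrix.cons_val_fin_one,
    Pi.star_apply, smul_eq_mul, if_true, if_false, Complex.normSq_apply]
  norm_num
  ring_nf

lemma sum_normSq_eq (v : ((Fin 2 × Fin 2) × Fin 2) → ℂ) :
    ∑ i, Complex.normSq (v i) =
      normSq (v ((0,0),0)) + normSq (v ((0,0),1)) + normSq (v ((0,1),0))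
      + normSq (v ((0,1),1)) + normSq (v ((1,0),0)) + normSq (v ((1,0),1))
      + normSq (v ((1,1),0)) + normSq (v ((1,1),1)) := by
  simp [Fintype.sum_prod_type, Fin.sum_univ_two]
  ring

end Aux

section Main

lemma sqrt_arg_eq (ε : ℝ) (hε0 : 0 ≤ ε) (hε1 : ε ≤ 1/2) :
    Real.sqrt (1 + 4 * (1 - 2 * ε) * Real.sqrt (ε * (1 - ε)))
      = 2 * Real.sqrt (ε * (1 - ε)) + (1 - 2 * ε) := by
  have hS2 : Real.sqrt (ε * (1 - ε)) ^ 2 = ε * (1 - ε) :=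
    Real.sq_sqrt (by nlinarith)
  have hS0 : 0 ≤ Real.sqrt (ε * (1 - ε)) := Real.sqrt_nonneg _
  rw [show 1 + 4 * (1 - 2 * ε) * Real.sqrt (ε * (1 - ε))
      = (2 * Real.sqrt (ε * (1 - ε)) + (1 - 2 * ε))^2 by linear_combination (-4 : ℝ) * hS2]
  exact Real.sqrt_sq (by linarith)

lemma ab_sq_le (ε : ℝ) (hε0 : 0 ≤ ε) (hε1 : ε ≤ 1/2) (θ : ℝ) :
    (aCoef ε θ)^2 + (bCoef ε θ)^2 ≤ (2 * Real.sqrt (ε * (1 - ε)) + (1 - 2 * ε))^2 := by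
  have hS0 : 0 ≤ Real.sqrt (ε * (1 - ε)) := Real.sqrt_nonneg _
  have hc0 : (0:ℝ) ≤ 1 - 2 * ε := by linarith
  have hpy : Real.sin (2*θ)^2 + Real.cos (2*θ)^2 = 1 := Real.sin_sq_add_cos_sq _
  unfold aCoef bCoef
  nlinarith [mul_nonneg (mul_nonneg hS0 hc0) (sq_nonneg (Real.sin (2*θ) - Real.cos (2*θ))),
    hpy, sq_nonneg (Real.sqrt (ε * (1 - ε))), sq_nonneg (1 - 2*ε),
    mul_nonneg hS0 hc0]

lemma rayleigh_le (ε : ℝ) (hε0 : 0 ≤ ε) (hε1 : ε ≤ 1/2) (θ : ℝ)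
    (v : ((Fin 2 × Fin 2) × Fin 2) → ℂ) (hv : ∑ i, Complex.normSq (v i) = 1) :
    (star v ⬝ᵥ (W4red ε θ *ᵥ v)).re
      ≤ 3 + 4 * (2 * Real.sqrt (ε * (1 - ε)) + (1 - 2 * ε)) := by
  set r := 2 * Real.sqrt (ε * (1 - ε)) + (1 - 2 * ε) with hr_def
  have hS0 : 0 ≤ Real.sqrt (ε * (1 - ε)) := Real.sqrt_nonneg _
  have hr : 0 ≤ r := by rw [hr_def]; linarith
  have hab : (aCoef ε θ)^2 + (bCoef ε θ)^2 ≤ r^2 := ab_sq_le ε hε0 hε1 θ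
  have ha : (aCoef ε θ)^2 ≤ r^2 := by nlinarith [sq_nonneg (bCoef ε θ)]
  rw [W4red_form]
  have h1 := pair0_le (aCoef ε θ) (bCoef ε θ) r hr hab (v ((0,0),0)) (v ((1,1),1))
  have h2 := pairM_le (aCoef ε θ) r hr ha (v ((0,0),1)) (v ((1,1),0))
  have h3 := pairM_le (aCoef ε θ) r hr ha (v ((0,1),0)) (v ((1,0),1))
  have h4 := pairM_le (aCoef ε θ) r hr ha (v ((0,1),1)) (v ((1,0),0))
  rw [sum_normSq_eq] at hv
  nlinarith [h1, h2, h3, h4]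

instance neUnit : Nonempty
    {v : ((Fin 2 × Fin 2) × Fin 2) → ℂ // ∑ i, Complex.normSq (v i) = 1} := by
  refine ⟨⟨fun i => if i = ((0,0),0) then 1 else 0, ?_⟩⟩
  simp [apply_ite Complex.normSq, Finset.sum_ite_eq']

end Main

section PiEight

/-- The optimal vector at θ = π/8. -/
def vOpt : ((Fin 2 × Fin 2) × Fin 2) → ℂ := fun i =>
  if i = ((0,0),0) then ((1 / Real.sqrt (4 - 2 * Real.sqrt 2) : ℝ) : ℂ)
  else if i = ((1,1),1) then
    (((Real.sqrt 2 - 1) / Real.sqrt (4 - 2 * Real.sqrt 2) : ℝ) : ℂ)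
  else 0

lemma q_facts : (Real.sqrt 2)^2 = 2 ∧ (0:ℝ) ≤ Real.sqrt 2 ∧ Real.sqrt 2 < 2 := by
  have h2 : (Real.sqrt 2)^2 = 2 := Real.sq_sqrt (by norm_num)
  have h0 : (0:ℝ) ≤ Real.sqrt 2 := Real.sqrt_nonneg _
  exact ⟨h2, h0, by nlinarith⟩

lemma N_facts : (Real.sqrt (4 - 2 * Real.sqrt 2))^2 = 4 - 2 * Real.sqrt 2
    ∧ (0:ℝ) < Real.sqrt (4 - 2 * Real.sqrt 2) := by
  obtain ⟨hq2, hq0, hq4⟩ := q_facts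
  constructor
  · exact Real.sq_sqrt (by nlinarith)
  · exact Real.sqrt_pos.2 (by nlinarith)

lemma vOpt_unit : ∑ i, Complex.normSq (vOpt i) = 1 := by
  obtain ⟨hq2, hq0, hq4⟩ := q_facts
  obtain ⟨hN2, hN0⟩ := N_facts
  rw [sum_normSq_eq]
  norm_num [vOpt, Complex.normSq_ofReal, -Complex.ofReal_div, -Complex.ofReal_sub]
  field_simp
  nlinarith [hN2, hq2]

lemma aCoef_pi8 (ε : ℝ) : aCoef ε (Real.pi / 8)
    = (2 * Real.sqrt (ε * (1 - ε)) + (1 - 2 * ε)) * (Real.sqrt 2 / 2) := by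
  unfold aCoef
  rw [show 2 * (Real.pi / 8) = Real.pi / 4 by ring, Real.cos_pi_div_four,
    Real.sin_pi_div_four]
  ring

lemma bCoef_pi8 (ε : ℝ) : bCoef ε (Real.pi / 8)
    = (2 * Real.sqrt (ε * (1 - ε)) + (1 - 2 * ε)) * (Real.sqrt 2 / 2) := by
  unfold bCoef
  rw [show 2 * (Real.pi / 8) = Real.pi / 4 by ring, Real.cos_pi_div_four,
    Real.sin_pi_div_four]
  ring

lemma vOpt_value (ε : ℝ) :
    (star vOpt ⬝ᵥ (W4red ε (Real.pi / 8) *ᵥ vOpt)).re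
      = 3 + 4 * (2 * Real.sqrt (ε * (1 - ε)) + (1 - 2 * ε)) := by
  obtain ⟨hq2, hq0, hq4⟩ := q_facts
  obtain ⟨hN2, hN0⟩ := N_facts
  set s := 2 * Real.sqrt (ε * (1 - ε)) + (1 - 2 * ε) with hs_def
  rw [W4red_form, aCoef_pi8, bCoef_pi8]
  norm_num [vOpt, Complex.normSq_ofReal, -Complex.ofReal_div, -Complex.ofReal_sub]
  field_simp
  linear_combination (6 - 4*s*Real.sqrt 2 + 16*s) * hq2 - (6 + 8*s) * hN2

end PiEight

/-- the biseparable bound of the four-qubit stabilizer witness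
    with imprecision only in one party. -/
theorem stab4_one_party_bound (ε : ℝ) (hε0 : 0 ≤ ε) (hε1 : ε ≤ 1 / 2) :
    (⨆ θ : ℝ, maxEig (W4red ε θ))
        = 3 + 4 * Real.sqrt (1 + 4 * (1 - 2 * ε) * Real.sqrt (ε * (1 - ε)))
      ∧ maxEig (W4red ε (Real.pi / 8))
        = 3 + 4 * Real.sqrt (1 + 4 * (1 - 2 * ε) * Real.sqrt (ε * (1 - ε))) := by
  have hε1' : ε ≤ 1/2 := hε1
  rw [sqrt_arg_eq ε hε0 hε1']
  set L := 3 + 4 * (2 * Real.sqrt (ε * (1 - ε)) + (1 - 2 * ε)) with hL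
  have hub : ∀ θ : ℝ, maxEig (W4red ε θ) ≤ L := by
    intro θ
    simp only [maxEig]
    exact ciSup_le fun v => rayleigh_le ε hε0 hε1' θ v.1 v.2
  have hpi : maxEig (W4red ε (Real.pi / 8)) = L := by
    refine le_antisymm (hub _) ?_
    have hbdd : BddAbove (Set.range fun
        v : {v : ((Fin 2 × Fin 2) × Fin 2) → ℂ // ∑ i, Complex.normSq (v i) = 1} =>
        (star v.1 ⬝ᵥ (W4red ε (Real.pi / 8) *ᵥ v.1)).re) := by
      refine ⟨L, ?_⟩
      rintro x ⟨v, rfl⟩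
      exact rayleigh_le ε hε0 hε1' _ v.1 v.2
    have h := le_ciSup hbdd (⟨vOpt, vOpt_unit⟩ :
      {v : ((Fin 2 × Fin 2) × Fin 2) → ℂ // ∑ i, Complex.normSq (v i) = 1})
    simp only [maxEig]
    rw [vOpt_value ε] at h
    exact h
  refine ⟨?_, hpi⟩
  refine le_antisymm (ciSup_le hub) ?_
  have hbdd2 : BddAbove (Set.range fun θ : ℝ => maxEig (W4red ε θ)) := by
    refine ⟨L, ?_⟩
    rintro x ⟨θ, rfl⟩
    exact hub θ
  have h := le_ciSup hbdd2 (Real.pi / 8)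
  rwa [hpi] at h
end
end

section
/- Fix ε with 0 ≤ ε ≤ 1/2 and set c = (1 − 2ε + 2√(ε(1−ε)))/√2. Then the largest eigenvalue of the Hermitian 4×4 matrix c·(X⊗I + I⊗X + Y⊗I + I⊗Y) + X⊗X + Y⊗Y equals 1 + √(5 + 16(1−2ε)√(ε(1−ε))). -/
open Matrix Complex Kronecker

noncomputable section

/-! The matrix `M_c = c (X⊗I + I⊗X + Y⊗I + I⊗Y) + X⊗X + Y⊗Y` has the eigenvector
`(2c(1-i), L, L, 2c(1+i))` for `L = 1 + √(1 + 8c²)`, and since `L² - 2L = 8c²`, the form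
`L² ‖v‖² - L ⟨v, M_c v⟩` is a sum of squared moduli. Hence `L` is the largest value of the
Rayleigh quotient. For the `c` of the theorem, `1 + 8c² = 5 + 16(1-2ε)√(ε(1-ε))`. -/

theorem star_dotProduct_self_eq_sum_normSq {m : Type*} [Fintype m] (v : m → ℂ) :
    star v ⬝ᵥ v = ∑ i, (normSq (v i) : ℂ) := by
  simp only [dotProduct, Pi.star_apply, RCLike.star_def, Complex.normSq_eq_conj_mul_self]

theorem maxEig_eq_of_mulVec_eq_smul {m : Type*} [Fintype m] [DecidableEq m]
    {M : Matrix m m ℂ} {L : ℝ}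
    (hle : ∀ v : m → ℂ, ∑ i, normSq (v i) = 1 → (star v ⬝ᵥ (M *ᵥ v)).re ≤ L)
    {w : m → ℂ} (hw : w ≠ 0) (hMw : M *ᵥ w = (L : ℂ) • w) :
    maxEig M = L := by
  set r := Real.sqrt (∑ i, normSq (w i))
  have hr : r ^ 2 = ∑ i, normSq (w i) :=
    Real.sq_sqrt (Finset.sum_nonneg fun i _ => normSq_nonneg _)
  have hr0 : r ≠ 0 := by
    intro h0
    rw [h0, zero_pow two_ne_zero, eq_comm,
      Finset.sum_eq_zero_iff_of_nonneg fun i _ => normSq_nonneg _] at hr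
    exact hw (funext fun i => Complex.normSq_eq_zero.mp (hr i (Finset.mem_univ i)))
  set v := ((r⁻¹ : ℝ) : ℂ) • w
  have hv : ∑ i, normSq (v i) = 1 := by
    simp only [v, Pi.smul_apply, smul_eq_mul, Complex.normSq_mul, Complex.normSq_ofReal,
      ← Finset.mul_sum, ← hr]
    field_simp
  have hMv : (star v ⬝ᵥ (M *ᵥ v)).re = L := by
    rw [mulVec_smul, hMw, smul_comm, dotProduct_smul, smul_eq_mul,
      star_dotProduct_self_eq_sum_normSq, ← Complex.ofReal_sum, hv]
    simp
  exact IsGreatest.csSup_eq ⟨⟨⟨v, hv⟩, hMv⟩, by rintro _ ⟨u, rfl⟩; exact hle u.1 u.2⟩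

def reducedWitness (c : ℝ) : Matrix (Fin 2 × Fin 2) (Fin 2 × Fin 2) ℂ :=
  (c : ℂ) • (PauliX ⊗ₖ Id2 + Id2 ⊗ₖ PauliX + PauliY ⊗ₖ Id2 + Id2 ⊗ₖ PauliY)
    + PauliX ⊗ₖ PauliX + PauliY ⊗ₖ PauliY

def reducedWitnessEigenvector (c L : ℝ) : Fin 2 × Fin 2 → ℂ :=
  fun p => !![2 * c * (1 - I), (L : ℂ); L, 2 * c * (1 + I)] p.1 p.2

theorem reducedWitness_mulVec_eigenvector {c L : ℝ} (hL : L ^ 2 - 2 * L = 8 * c ^ 2) :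
    reducedWitness c *ᵥ reducedWitnessEigenvector c L
      = (L : ℂ) • reducedWitnessEigenvector c L := by
  have hLC : (L : ℂ) ^ 2 - 2 * L = 8 * (c : ℂ) ^ 2 := by exact_mod_cast hL
  funext p
  fin_cases p <;>
    simp [reducedWitness, reducedWitnessEigenvector, mulVec, dotProduct, Fintype.sum_prod_type,
      PauliX, PauliY, Id2, one_apply] <;>
    grind [I_sq]

theorem reducedWitness_sos {c L : ℝ} (hL : L ^ 2 - 2 * L = 8 * c ^ 2) (v : Fin 2 × Fin 2 → ℂ) :
    L ^ 2 * ∑ i, normSq (v i) - L * (star v ⬝ᵥ (reducedWitness c *ᵥ v)).re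
      = normSq (L * v (0, 0) - c * (1 - I) * (v (0, 1) + v (1, 0)))
        + normSq (L * v (1, 1) - c * (1 + I) * (v (0, 1) + v (1, 0)))
        + L * (L + 2) / 2 * normSq (v (0, 1) - v (1, 0)) := by
  simp [reducedWitness, mulVec, dotProduct, Fintype.sum_prod_type, PauliX, PauliY, Id2,
    one_apply, Complex.normSq_apply]
  linear_combination (((v (0, 1)).re + (v (1, 0)).re) ^ 2
    + ((v (0, 1)).im + (v (1, 0)).im) ^ 2) / 2 * hL

theorem re_star_dotProduct_reducedWitness_mulVec_le {c L : ℝ}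
    (hL : L ^ 2 - 2 * L = 8 * c ^ 2) (hL0 : 0 < L) {v : Fin 2 × Fin 2 → ℂ}
    (hv : ∑ i, normSq (v i) = 1) :
    (star v ⬝ᵥ (reducedWitness c *ᵥ v)).re ≤ L := by
  have hsos := reducedWitness_sos hL v
  rw [hv, mul_one] at hsos
  have : 0 ≤ L * (L - (star v ⬝ᵥ (reducedWitness c *ᵥ v)).re) := by
    rw [mul_sub, ← sq, hsos]
    exact add_nonneg (add_nonneg (normSq_nonneg _) (normSq_nonneg _))
      (mul_nonneg (by positivity) (normSq_nonneg _))
  nlinarith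

theorem maxEig_reducedWitness (c : ℝ) :
    maxEig (reducedWitness c) = 1 + Real.sqrt (1 + 8 * c ^ 2) := by
  set L := 1 + Real.sqrt (1 + 8 * c ^ 2)
  have hL : L ^ 2 - 2 * L = 8 * c ^ 2 := by
    linear_combination Real.sq_sqrt (by positivity : (0 : ℝ) ≤ 1 + 8 * c ^ 2)
  have hL0 : 0 < L := by positivity
  refine maxEig_eq_of_mulVec_eq_smul
    (fun v hv => re_star_dotProduct_reducedWitness_mulVec_le hL hL0 hv)
    (fun h => hL0.ne' ?_) (reducedWitness_mulVec_eigenvector hL)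
  simpa [reducedWitnessEigenvector] using congrFun h (0, 1)

/-- the biseparable bound of the three-qubit W-state witness with
    imprecision only in one party: the largest eigenvalue of
    c·(X⊗I + I⊗X + Y⊗I + I⊗Y) + X⊗X + Y⊗Y, with
    c = (1 − 2ε + 2√(ε(1−ε)))/√2, equals 1 + √(5 + 16(1−2ε)√(ε(1−ε))). -/
theorem w_state_one_party_bound (ε : ℝ) (hε0 : 0 ≤ ε) (hε1 : ε ≤ 1 / 2) :
    maxEig
      ((((1 - 2 * ε + 2 * Real.sqrt (ε * (1 - ε))) / Real.sqrt 2 : ℝ) : ℂ) •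
          (PauliX ⊗ₖ Id2 + Id2 ⊗ₖ PauliX + PauliY ⊗ₖ Id2 + Id2 ⊗ₖ PauliY)
        + PauliX ⊗ₖ PauliX + PauliY ⊗ₖ PauliY)
      = 1 + Real.sqrt (5 + 16 * (1 - 2 * ε) * Real.sqrt (ε * (1 - ε))) := by
  have hs := Real.sq_sqrt (by nlinarith : 0 ≤ ε * (1 - ε))
  have hc : 1 + 8 * ((1 - 2 * ε + 2 * Real.sqrt (ε * (1 - ε))) / Real.sqrt 2) ^ 2
      = 5 + 16 * (1 - 2 * ε) * Real.sqrt (ε * (1 - ε)) := by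
    rw [div_pow, Real.sq_sqrt zero_le_two]
    linear_combination 16 * hs
  rw [← hc]
  exact maxEig_reducedWitness _
end
end

section
/- Fix ε with 0 ≤ ε ≤ 1/2 and for θ ∈ ℝ set a(θ) = 2√(ε(1−ε))·cos 2θ + (1−2ε)·sin 2θ and b(θ) = (1−2ε)·cos 2θ + 2√(ε(1−ε))·sin 2θ. Then the supremum over θ ∈ ℝ of the largest eigenvalue of the Hermitian 8×8 matrix a(θ)·(Z⊗I⊗I + I⊗X⊗Z) + b(θ)·(X⊗Z⊗I + X⊗I⊗X) + I⊗Z⊗X + Z⊗X⊗Z equals 2·(1 + √(1 + 4(1−2ε)√(ε(1−ε)))), and it is attained at θ = π/8. -/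
open Matrix Complex Kronecker

noncomputable section

/-- The reduced four-qubit cluster-state witness operator
    a(θ)·(Z⊗I⊗I + I⊗X⊗Z) + b(θ)·(X⊗Z⊗I + X⊗I⊗X) + I⊗Z⊗X + Z⊗X⊗Z. -/
def C4red (ε θ : ℝ) : Matrix ((Fin 2 × Fin 2) × Fin 2) ((Fin 2 × Fin 2) × Fin 2) ℂ :=
  ((aCoef ε θ : ℝ) : ℂ) • (PauliZ ⊗ₖ Id2 ⊗ₖ Id2 + Id2 ⊗ₖ PauliX ⊗ₖ PauliZ)
    + ((bCoef ε θ : ℝ) : ℂ) • (PauliX ⊗ₖ PauliZ ⊗ₖ Id2 + PauliX ⊗ₖ Id2 ⊗ₖ PauliX)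
    + Id2 ⊗ₖ PauliZ ⊗ₖ PauliX + PauliZ ⊗ₖ PauliX ⊗ₖ PauliZ

/-!
Write the operator as `a • A + b • B + C` with `A = Z⊗I⊗I + I⊗X⊗Z`, `B = X⊗Z⊗I + X⊗I⊗X` and
`C = I⊗Z⊗X + Z⊗X⊗Z`. Each of `A`, `B`, `C` is a sum of two commuting Hermitian involutions, so its
square is at most `4`; moreover `A` and `B` anticommute, so `(a • A + b • B)² ≤ 4 (a² + b²)`.
A Hermitian `H` with `H² ≤ r²` satisfies `H ≤ r`, since `2r (r - H) = (r - H)² + (r² - H²)`.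
Hence the operator is at most `2 √(a² + b²) + 2 ≤ 2 (1 - 2ε + 2√(ε(1-ε))) + 2`, and the square of
`1 - 2ε + 2√(ε(1-ε))` is `1 + 4 (1 - 2ε) √(ε(1-ε))`. At `θ = π/8` we have `a = b`, and an explicit
common eigenvector of `A + B` (eigenvalue `2√2`) and `C` (eigenvalue `2`) attains the bound.
-/

open Real
open scoped MatrixOrder ComplexOrder

@[simp]
lemma Id2_eq_one : Id2 = 1 := rfl

lemma PauliX_isHermitian : PauliX.IsHermitian := by
  ext i j; fin_cases i <;> fin_cases j <;> simp [PauliX]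

lemma PauliZ_isHermitian : PauliZ.IsHermitian := by
  ext i j; fin_cases i <;> fin_cases j <;> simp [PauliZ]

@[simp]
lemma PauliX_mul_self : PauliX * PauliX = 1 := by
  ext i j; fin_cases i <;> fin_cases j <;> simp [PauliX, mul_apply, Fin.sum_univ_two]

@[simp]
lemma PauliZ_mul_self : PauliZ * PauliZ = 1 := by
  ext i j; fin_cases i <;> fin_cases j <;> simp [PauliZ, mul_apply, Fin.sum_univ_two]

@[simp]
lemma PauliX_mul_PauliZ : PauliX * PauliZ = -(PauliZ * PauliX) := by
  ext i j; fin_cases i <;> fin_cases j <;> simp [PauliX, PauliZ, mul_apply, Fin.sum_univ_two]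

namespace Matrix

section Kronecker

variable {R l m n p : Type*} [CommRing R]

@[simp]
lemma neg_kronecker (A : Matrix l m R) (B : Matrix n p R) : (-A) ⊗ₖ B = -(A ⊗ₖ B) := by
  ext; simp [kroneckerMap_apply]

@[simp]
lemma kronecker_neg (A : Matrix l m R) (B : Matrix n p R) : A ⊗ₖ (-B) = -(A ⊗ₖ B) := by
  ext; simp [kroneckerMap_apply]

end Kronecker

variable {n : Type*} [DecidableEq n]

lemma smul_one_le_smul_one {s t : ℝ} (h : s ≤ t) :
    (s : ℂ) • (1 : Matrix n n ℂ) ≤ (t : ℂ) • 1 := by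
  rw [le_iff, ← sub_smul, ← Complex.ofReal_sub]
  exact PosSemidef.one.smul (by exact_mod_cast sub_nonneg.mpr h)

variable [Fintype n]

lemma le_smul_one_of_mul_self_le {H : Matrix n n ℂ} (hH : H.IsHermitian) {r : ℝ} (hr : 0 < r)
    (h : H * H ≤ ((r ^ 2 : ℝ) : ℂ) • 1) : H ≤ (r : ℂ) • 1 := by
  set D := (r : ℂ) • 1 - H
  have hD : Dᴴ = D := by simp [D, hH.eq, conjTranspose_smul]
  have key : ((2 * r : ℝ) : ℂ) • D = Dᴴ * D + (((r ^ 2 : ℝ) : ℂ) • 1 - H * H) := by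
    rw [hD]
    simp only [D, sub_mul, mul_sub, Matrix.smul_mul, Matrix.mul_smul, one_mul, mul_one, smul_smul]
    push_cast
    module
  have hcancel : (((2 * r)⁻¹ : ℝ) : ℂ) • (((2 * r : ℝ) : ℂ) • D) = D := by
    rw [smul_smul, ← Complex.ofReal_mul, inv_mul_cancel₀ (by positivity), Complex.ofReal_one,
      one_smul]
  change D.PosSemidef
  rw [← hcancel, key]
  exact ((posSemidef_conjTranspose_mul_self D).add h).smul (by positivity)

lemma add_mul_self_le_four_of_commute {S T : Matrix n n ℂ} (hS : S.IsHermitian)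
    (hT : T.IsHermitian) (hSS : S * S = 1) (hTT : T * T = 1) (hST : Commute S T) :
    (S + T) * (S + T) ≤ (4 : ℂ) • 1 := by
  have key : (4 : ℂ) • 1 - (S + T) * (S + T) = (1 - S * T)ᴴ * (1 - S * T) := by
    have hSTST : S * T * (S * T) = 1 := by
      rw [mul_assoc, ← mul_assoc T, ← hST.eq, mul_assoc, hTT, mul_one, hSS]
    rw [conjTranspose_sub, conjTranspose_one, conjTranspose_mul, hS.eq, hT.eq, ← hST.eq]
    simp only [add_mul, mul_add, sub_mul, mul_sub, one_mul, mul_one, hSS, hTT, hSTST,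
      ← hST.eq]
    module
  rw [le_iff, key]
  exact posSemidef_conjTranspose_mul_self _

lemma smul_add_smul_mul_self_le {A B : Matrix n n ℂ} (hAB : A * B + B * A = 0) {c : ℝ}
    (hA : A * A ≤ (c : ℂ) • 1) (hB : B * B ≤ (c : ℂ) • 1) (a b : ℝ) :
    ((a : ℂ) • A + (b : ℂ) • B) * ((a : ℂ) • A + (b : ℂ) • B)
      ≤ ((c * (a ^ 2 + b ^ 2) : ℝ) : ℂ) • 1 := by
  have key : ((c * (a ^ 2 + b ^ 2) : ℝ) : ℂ) • 1
        - ((a : ℂ) • A + (b : ℂ) • B) * ((a : ℂ) • A + (b : ℂ) • B)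
      = ((a ^ 2 : ℝ) : ℂ) • ((c : ℂ) • 1 - A * A) + ((b ^ 2 : ℝ) : ℂ) • ((c : ℂ) • 1 - B * B)
        - ((a * b : ℝ) : ℂ) • (A * B + B * A) := by
    simp only [add_mul, mul_add, Matrix.smul_mul, Matrix.mul_smul, smul_smul]
    push_cast
    module
  rw [le_iff, key, hAB, smul_zero, sub_zero]
  exact ((le_iff.mp hA).smul (by positivity)).add ((le_iff.mp hB).smul (by positivity))

end Matrix

section maxEig
variable {n : Type*} [Fintype n]

lemma re_dotProduct_star_self (v : n → ℂ) : (star v ⬝ᵥ v).re = ∑ i, Complex.normSq (v i) := by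
  simp [dotProduct, Complex.re_sum, Complex.normSq_apply, mul_comm]

lemma exists_sum_normSq_smul_eq_one {u : n → ℂ} (hu : u ≠ 0) :
    ∃ t : ℂ, ∑ i, Complex.normSq ((t • u) i) = 1 := by
  have hpos : 0 < ∑ i, Complex.normSq (u i) := by
    rw [← re_dotProduct_star_self]
    exact (Complex.pos_iff.mp (dotProduct_star_self_pos_iff.mpr hu)).1
  refine ⟨((√(∑ i, Complex.normSq (u i)))⁻¹ : ℝ), ?_⟩
  simp only [Pi.smul_apply, smul_eq_mul, Complex.normSq_mul, Complex.normSq_ofReal,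
    ← Finset.mul_sum]
  rw [← sq, inv_pow, Real.sq_sqrt hpos.le, inv_mul_cancel₀ hpos.ne']

variable [DecidableEq n]

lemma re_dotProduct_mulVec_le {M : Matrix n n ℂ} {c : ℝ} (h : M ≤ (c : ℂ) • 1) (v : n → ℂ) :
    (star v ⬝ᵥ (M *ᵥ v)).re ≤ c * ∑ i, Complex.normSq (v i) := by
  have hv := Complex.nonneg_iff.mp ((le_iff.mp h).dotProduct_mulVec_nonneg v)
  rw [sub_mulVec, smul_mulVec, one_mulVec, dotProduct_sub, dotProduct_smul, Complex.sub_re,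
    smul_eq_mul, Complex.re_ofReal_mul, re_dotProduct_star_self] at hv
  linarith [hv.1]

lemma maxEig_le [Nonempty n] {M : Matrix n n ℂ} {c : ℝ} (h : M ≤ (c : ℂ) • 1) :
    maxEig M ≤ c := by
  obtain ⟨i⟩ := ‹Nonempty n›
  have : Nonempty {v : n → ℂ // ∑ i, Complex.normSq (v i) = 1} :=
    ⟨⟨Pi.single i 1, by simp [apply_ite Complex.normSq, Pi.single_apply]⟩⟩
  exact ciSup_le fun v => by simpa [v.2] using re_dotProduct_mulVec_le h v.1

lemma maxEig_eq_of_le_of_mulVec_eq {M : Matrix n n ℂ} {c : ℝ} (h : M ≤ (c : ℂ) • 1)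
    {u : n → ℂ} (hu : u ≠ 0) (hMu : M *ᵥ u = (c : ℂ) • u) : maxEig M = c := by
  obtain ⟨t, ht⟩ := exists_sum_normSq_smul_eq_one hu
  obtain ⟨i, -⟩ := Function.ne_iff.mp hu
  have : Nonempty n := ⟨i⟩
  refine le_antisymm (maxEig_le h) (le_ciSup_of_le ?_ ⟨t • u, ht⟩ ?_)
  · exact ⟨c, by rintro _ ⟨v, rfl⟩; simpa [v.2] using re_dotProduct_mulVec_le h v.1⟩
  · rw [mulVec_smul, hMu, smul_comm, dotProduct_smul, smul_eq_mul, Complex.re_ofReal_mul,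
      re_dotProduct_star_self, ht, mul_one]

end maxEig

def clusterA : Matrix ((Fin 2 × Fin 2) × Fin 2) ((Fin 2 × Fin 2) × Fin 2) ℂ :=
  PauliZ ⊗ₖ Id2 ⊗ₖ Id2 + Id2 ⊗ₖ PauliX ⊗ₖ PauliZ

def clusterB : Matrix ((Fin 2 × Fin 2) × Fin 2) ((Fin 2 × Fin 2) × Fin 2) ℂ :=
  PauliX ⊗ₖ PauliZ ⊗ₖ Id2 + PauliX ⊗ₖ Id2 ⊗ₖ PauliX

def clusterC : Matrix ((Fin 2 × Fin 2) × Fin 2) ((Fin 2 × Fin 2) × Fin 2) ℂ :=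
  Id2 ⊗ₖ PauliZ ⊗ₖ PauliX + PauliZ ⊗ₖ PauliX ⊗ₖ PauliZ

lemma C4red_eq (ε θ : ℝ) :
    C4red ε θ = (aCoef ε θ : ℂ) • clusterA + (bCoef ε θ : ℂ) • clusterB + clusterC := by
  rw [C4red, clusterA, clusterB, clusterC, add_assoc _ (Id2 ⊗ₖ _ ⊗ₖ _)]

lemma clusterA_isHermitian : clusterA.IsHermitian := by
  simp [clusterA, IsHermitian, conjTranspose_kronecker, PauliX_isHermitian.eq,
    PauliZ_isHermitian.eq]

lemma clusterB_isHermitian : clusterB.IsHermitian := by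
  simp [clusterB, IsHermitian, conjTranspose_kronecker, PauliX_isHermitian.eq,
    PauliZ_isHermitian.eq]

lemma clusterC_isHermitian : clusterC.IsHermitian := by
  simp [clusterC, IsHermitian, conjTranspose_kronecker, PauliX_isHermitian.eq,
    PauliZ_isHermitian.eq]

lemma clusterA_mul_self_le : clusterA * clusterA ≤ (4 : ℂ) • 1 := by
  apply add_mul_self_le_four_of_commute <;>
    simp [IsHermitian, conjTranspose_kronecker, PauliX_isHermitian.eq, PauliZ_isHermitian.eq,
      Commute, SemiconjBy, ← mul_kronecker_mul]

lemma clusterB_mul_self_le : clusterB * clusterB ≤ (4 : ℂ) • 1 := by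
  apply add_mul_self_le_four_of_commute <;>
    simp [IsHermitian, conjTranspose_kronecker, PauliX_isHermitian.eq, PauliZ_isHermitian.eq,
      Commute, SemiconjBy, ← mul_kronecker_mul]

lemma clusterC_mul_self_le : clusterC * clusterC ≤ (4 : ℂ) • 1 := by
  apply add_mul_self_le_four_of_commute <;>
    simp [IsHermitian, conjTranspose_kronecker, PauliX_isHermitian.eq, PauliZ_isHermitian.eq,
      Commute, SemiconjBy, ← mul_kronecker_mul]

lemma clusterA_mul_clusterB_add : clusterA * clusterB + clusterB * clusterA = 0 := by
  simp only [clusterA, clusterB, Id2_eq_one, add_mul, mul_add, ← mul_kronecker_mul, mul_one,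
    one_mul, PauliX_mul_PauliZ, neg_kronecker, kronecker_neg]
  abel

def clusterEigvec : (Fin 2 × Fin 2) × Fin 2 → ℂ := fun p =>
  let q : ℂ := ((√2 - 1 : ℝ) : ℂ)
  ![![![1, 1], ![1, -1]], ![![q, q], ![-q, q]]] p.1.1 p.1.2 p.2

lemma clusterEigvec_ne_zero : clusterEigvec ≠ 0 :=
  Function.ne_iff.mpr ⟨((0, 0), 0), by simp [clusterEigvec]⟩

lemma clusterA_add_clusterB_mulVec_clusterEigvec :
    (clusterA + clusterB) *ᵥ clusterEigvec = ((2 * √2 : ℝ) : ℂ) • clusterEigvec := by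
  have hsqrt2 : ((√2 : ℝ) : ℂ) ^ 2 = 2 := by
    rw [← Complex.ofReal_pow, Real.sq_sqrt zero_le_two, Complex.ofReal_ofNat]
  ext ⟨⟨i, j⟩, k⟩
  fin_cases i <;> fin_cases j <;> fin_cases k <;>
    simp [clusterA, clusterB, clusterEigvec, mulVec, dotProduct, Fintype.sum_prod_type,
      kroneckerMap_apply, PauliX, PauliZ, one_apply] <;> grind

lemma clusterC_mulVec_clusterEigvec : clusterC *ᵥ clusterEigvec = (2 : ℂ) • clusterEigvec := by
  ext ⟨⟨i, j⟩, k⟩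
  fin_cases i <;> fin_cases j <;> fin_cases k <;>
    simp [clusterC, clusterEigvec, mulVec, dotProduct, Fintype.sum_prod_type,
      kroneckerMap_apply, PauliX, PauliZ, one_apply] <;> ring

lemma mul_cos_add_mul_sin_sq_add_sq_le {p q : ℝ} (hp : 0 ≤ p) (hq : 0 ≤ q) (x : ℝ) :
    (p * Real.cos x + q * Real.sin x) ^ 2 + (q * Real.cos x + p * Real.sin x) ^ 2
      ≤ (p + q) ^ 2 := by
  nlinarith [Real.sin_sq_add_cos_sq x,
    mul_nonneg (mul_nonneg hp hq) (sq_nonneg (Real.cos x - Real.sin x))]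

def coefBound (ε : ℝ) : ℝ := 1 - 2 * ε + 2 * √(ε * (1 - ε))

lemma aCoef_sq_add_bCoef_sq_le {ε : ℝ} (hε : ε ≤ 1 / 2) (θ : ℝ) :
    aCoef ε θ ^ 2 + bCoef ε θ ^ 2 ≤ coefBound ε ^ 2 := by
  rw [coefBound, add_comm (1 - 2 * ε)]
  exact mul_cos_add_mul_sin_sq_add_sq_le (by positivity) (by linarith) (2 * θ)

lemma sqrt_eq_coefBound {ε : ℝ} (hε0 : 0 ≤ ε) (hε1 : ε ≤ 1 / 2) :
    √(1 + 4 * (1 - 2 * ε) * √(ε * (1 - ε))) = coefBound ε := by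
  have hs := Real.sq_sqrt (show 0 ≤ ε * (1 - ε) by nlinarith)
  rw [Real.sqrt_eq_iff_eq_sq (by nlinarith [Real.sqrt_nonneg (ε * (1 - ε))]) (by
    unfold coefBound; nlinarith [Real.sqrt_nonneg (ε * (1 - ε))]), coefBound]
  nlinarith

lemma one_le_coefBound {ε : ℝ} (hε0 : 0 ≤ ε) (hε1 : ε ≤ 1 / 2) : 1 ≤ coefBound ε := by
  rw [← sqrt_eq_coefBound hε0 hε1, Real.one_le_sqrt]
  nlinarith [Real.sqrt_nonneg (ε * (1 - ε))]

lemma aCoef_pi_div_eight (ε : ℝ) : aCoef ε (π / 8) = √2 / 2 * coefBound ε := by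
  rw [aCoef, coefBound, show 2 * (π / 8) = π / 4 by ring, cos_pi_div_four, sin_pi_div_four]
  ring

lemma bCoef_pi_div_eight (ε : ℝ) : bCoef ε (π / 8) = aCoef ε (π / 8) := by
  rw [aCoef, bCoef, show 2 * (π / 8) = π / 4 by ring, cos_pi_div_four, sin_pi_div_four]
  ring

lemma C4red_le {ε : ℝ} (hε0 : 0 ≤ ε) (hε1 : ε ≤ 1 / 2) (θ : ℝ) :
    C4red ε θ ≤ ((2 * coefBound ε + 2 : ℝ) : ℂ) • 1 := by
  have hR := one_le_coefBound hε0 hε1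
  rw [C4red_eq, Complex.ofReal_add, add_smul]
  refine add_le_add (le_smul_one_of_mul_self_le ?_ (by linarith) ?_)
    (le_smul_one_of_mul_self_le clusterC_isHermitian two_pos
      (by exact_mod_cast clusterC_mul_self_le))
  · exact (clusterA_isHermitian.smul (Complex.conj_ofReal _)).add
      (clusterB_isHermitian.smul (Complex.conj_ofReal _))
  · calc _ ≤ ((4 * (aCoef ε θ ^ 2 + bCoef ε θ ^ 2) : ℝ) : ℂ) • 1 :=
          smul_add_smul_mul_self_le clusterA_mul_clusterB_add
            (by exact_mod_cast clusterA_mul_self_le) (by exact_mod_cast clusterB_mul_self_le) _ _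
      _ ≤ (((2 * coefBound ε) ^ 2 : ℝ) : ℂ) • 1 :=
          smul_one_le_smul_one (by nlinarith [aCoef_sq_add_bCoef_sq_le hε1 θ])

lemma C4red_pi_div_eight_mulVec (ε : ℝ) :
    C4red ε (π / 8) *ᵥ clusterEigvec = ((2 * coefBound ε + 2 : ℝ) : ℂ) • clusterEigvec := by
  have hsqrt2 : √2 / 2 * coefBound ε * (2 * √2) = 2 * coefBound ε := by
    rw [show √2 / 2 * coefBound ε * (2 * √2) = √2 ^ 2 * coefBound ε by ring,
      Real.sq_sqrt zero_le_two]
  rw [C4red_eq, bCoef_pi_div_eight, ← smul_add, add_mulVec, smul_mulVec,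
    clusterA_add_clusterB_mulVec_clusterEigvec, clusterC_mulVec_clusterEigvec, smul_smul,
    ← Complex.ofReal_mul, aCoef_pi_div_eight, hsqrt2, ← add_smul]
  norm_num

/-- the biseparable bound of the four-qubit cluster-state witness
    with imprecision only in one party. -/
theorem cluster_one_party_bound (ε : ℝ) (hε0 : 0 ≤ ε) (hε1 : ε ≤ 1 / 2) :
    (⨆ θ : ℝ, maxEig (C4red ε θ))
        = 2 * (1 + Real.sqrt (1 + 4 * (1 - 2 * ε) * Real.sqrt (ε * (1 - ε))))
      ∧ maxEig (C4red ε (Real.pi / 8))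
        = 2 * (1 + Real.sqrt (1 + 4 * (1 - 2 * ε) * Real.sqrt (ε * (1 - ε)))) := by
  have hmax : ∀ θ, maxEig (C4red ε θ) ≤ 2 * coefBound ε + 2 :=
    fun θ => maxEig_le (C4red_le hε0 hε1 θ)
  have hπ8 : maxEig (C4red ε (π / 8)) = 2 * coefBound ε + 2 :=
    maxEig_eq_of_le_of_mulVec_eq (C4red_le hε0 hε1 _) clusterEigvec_ne_zero
      (C4red_pi_div_eight_mulVec ε)
  rw [sqrt_eq_coefBound hε0 hε1, show 2 * (1 + coefBound ε) = 2 * coefBound ε + 2 by ring]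
  refine ⟨le_antisymm (ciSup_le hmax) ?_, hπ8⟩
  exact hπ8 ▸ le_ciSup ⟨_, Set.forall_mem_range.mpr hmax⟩ (π / 8)

end
end
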